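/- Let y, z ∈ ℂ with |y| < 1, |z| < 1 and y ≠ 1. Then the infinite product over all pairs of integers (a,b) with a ≥ 0, b ≥ 1, a < b and gcd(a,b) = 1 of (1/(1 − y^a z^b))^(1/b) equals ((1 − yz)/(1 − z))^(1/(1 − y)). -/

import Mathlib

/-!
Take logarithms: the factor indexed by the reduced fraction `a/b` contributes
`-log (1 - y^a z^b) / b = ∑_{k ≥ 1} y^{ka} z^{kb} / (kb)`. Every pair `a' < b'` is `k • (a, b)` for
exactly one reduced `a/b` and one `k ≥ 1` (namely `k = gcd a' b'`), so the logarithm of the product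
is `∑_{a' < b'} y^{a'} z^{b'} / b'`. Summing over `a'` first gives the geometric sum
`(1 - y^{b'}) / (1 - y)`, and then the two logarithmic series yield
`(log (1 - y z) - log (1 - z)) / (1 - y)`.
-/

open Complex Function

lemma Complex.re_one_sub_pos {u : ℂ} (hu : ‖u‖ < 1) : 0 < (1 - u).re := by
  have := (abs_le.mp (abs_re_le_norm u)).2
  simp only [sub_re, one_re]
  linarith

lemma Complex.div_cpow_eq_exp_of_re_pos {a b : ℂ} (ha : 0 < a.re) (hb : 0 < b.re) (s : ℂ) :
    (a / b) ^ s = exp ((log a - log b) * s) := by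
  have ha₀ : a ≠ 0 := fun h ↦ by simp [h] at ha
  have hb₀ : b ≠ 0 := fun h ↦ by simp [h] at hb
  have harg : |a.arg| < Real.pi / 2 := abs_arg_lt_pi_div_two_iff.mpr (Or.inl ha)
  have hbarg : |b⁻¹.arg| < Real.pi / 2 := by
    rw [abs_arg_inv]; exact abs_arg_lt_pi_div_two_iff.mpr (Or.inl hb)
  have hb_ne_pi : b.arg ≠ Real.pi := fun h ↦ by
    linarith [(arg_eq_pi_iff.mp h).1]
  have hlog : log (a / b) = log a - log b := by
    rw [div_eq_mul_inv, (log_mul_eq_add_log_iff ha₀ (inv_ne_zero hb₀)).mpr, log_inv b hb_ne_pi,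
      sub_eq_add_neg]
    constructor <;> linarith [abs_lt.mp harg, abs_lt.mp hbarg]
  rw [cpow_def_of_ne_zero (div_ne_zero ha₀ hb₀), hlog]

lemma Complex.one_div_cpow_eq_exp_of_re_pos {b : ℂ} (hb : 0 < b.re) (s : ℂ) :
    (1 / b) ^ s = exp (-log b * s) := by
  simpa using div_cpow_eq_exp_of_re_pos (a := 1) zero_lt_one hb s

/-- Pairs `(a, b)` such that `a / b` is a reduced fraction in `[0, 1)`. -/
abbrev ReducedFraction := {p : ℕ × ℕ // 1 ≤ p.2 ∧ p.1 < p.2 ∧ Nat.gcd p.1 p.2 = 1}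

namespace ReducedFraction

def scale (x : ReducedFraction × ℕ) : ℕ × ℕ := (x.2 + 1) • (x.1 : ℕ × ℕ)

lemma scale_injective : Injective scale := by
  rintro ⟨⟨⟨a, b⟩, _, _, hab⟩, k⟩ ⟨⟨⟨a', b'⟩, _, _, hab'⟩, k'⟩ h
  simp only [scale, Prod.smul_mk, smul_eq_mul, Prod.mk.injEq] at h hab hab'
  obtain ⟨ha, hb⟩ := h
  have hk : k + 1 = k' + 1 := by
    have := congrArg₂ Nat.gcd ha hb
    rwa [Nat.gcd_mul_left, Nat.gcd_mul_left, hab, hab', mul_one, mul_one] at this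
  obtain rfl : k = k' := by omega
  obtain rfl := Nat.eq_of_mul_eq_mul_left k.succ_pos ha
  obtain rfl := Nat.eq_of_mul_eq_mul_left k.succ_pos hb
  rfl

lemma range_scale : Set.range scale = {q | q.1 < q.2} := by
  ext ⟨a, b⟩
  constructor
  · rintro ⟨⟨⟨⟨a₀, b₀⟩, _, hlt, _⟩, k⟩, h⟩
    simp only [scale, Prod.smul_mk, smul_eq_mul, Prod.mk.injEq] at h
    simp only [Set.mem_ofPred_eq, ← h.1, ← h.2]
    exact Nat.mul_lt_mul_of_pos_left hlt k.succ_pos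
  · intro (hab : a < b)
    have hd : 0 < Nat.gcd a b := Nat.gcd_pos_of_pos_right _ (by omega)
    refine ⟨⟨⟨(a / Nat.gcd a b, b / Nat.gcd a b), ?_, ?_, ?_⟩, Nat.gcd a b - 1⟩, ?_⟩
    · exact (Nat.one_le_div_iff hd).mpr (Nat.gcd_le_right _ (by omega))
    · exact Nat.div_lt_div_of_lt_of_dvd (Nat.gcd_dvd_right a b) hab
    · exact Nat.coprime_div_gcd_div_gcd hd
    · simp only [scale, Prod.smul_mk, smul_eq_mul, Nat.sub_add_cancel hd,
        Nat.mul_div_cancel' (Nat.gcd_dvd_left a b), Nat.mul_div_cancel' (Nat.gcd_dvd_right a b)]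

end ReducedFraction

section LtPairSeries

variable (y z : ℂ)

noncomputable def ltPairTerm (q : ℕ × ℕ) : ℂ := if q.1 < q.2 then y ^ q.1 * z ^ q.2 / q.2 else 0

variable {y z}

lemma norm_pow_mul_pow_lt_one (hy : ‖y‖ ≤ 1) (hz : ‖z‖ < 1) (a : ℕ) {b : ℕ} (hb : b ≠ 0) :
    ‖y ^ a * z ^ b‖ < 1 := by
  rw [norm_mul, norm_pow, norm_pow]
  exact mul_lt_one_of_nonneg_of_lt_one_right (pow_le_one₀ (norm_nonneg _) hy)
    (by positivity) (pow_lt_one₀ (norm_nonneg _) hz hb)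

lemma norm_ltPairTerm_le (q : ℕ × ℕ) : ‖ltPairTerm y z q‖ ≤ ‖y‖ ^ q.1 * ‖z‖ ^ q.2 := by
  unfold ltPairTerm
  split_ifs with h
  · rw [norm_div, norm_mul, norm_pow, norm_pow, Complex.norm_natCast]
    exact div_le_self (by positivity) (by exact_mod_cast (by omega : 1 ≤ q.2))
  · simp only [norm_zero]; positivity

lemma hasSum_ltPairTerm_fiber (b : ℕ) (hy : y ≠ 1) :
    HasSum (fun a ↦ ltPairTerm y z (a, b)) ((z ^ b - (y * z) ^ b) / b * (1 / (1 - y))) := by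
  have hvanish : ∀ a ∉ Finset.range b, ltPairTerm y z (a, b) = 0 := fun a ha ↦ by
    simp_all [ltPairTerm]
  have hval : (z ^ b - (y * z) ^ b) / b * (1 / (1 - y))
      = ∑ a ∈ Finset.range b, ltPairTerm y z (a, b) := calc
    _ = (∑ a ∈ Finset.range b, y ^ a) * z ^ b / b := by
        rw [geom_sum_eq hy, mul_pow]; field_simp; ring
    _ = ∑ a ∈ Finset.range b, ltPairTerm y z (a, b) := by
        rw [Finset.sum_mul, Finset.sum_div]
        refine Finset.sum_congr rfl fun a ha ↦ ?_
        simp [ltPairTerm, Finset.mem_range.mp ha]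
  exact hval ▸ hasSum_sum_of_ne_finset_zero hvanish

lemma hasSum_ltPairTerm (hy : ‖y‖ < 1) (hz : ‖z‖ < 1) :
    HasSum (ltPairTerm y z) ((log (1 - y * z) - log (1 - z)) * (1 / (1 - y))) := by
  have hy1 : y ≠ 1 := by rintro rfl; simp at hy
  have hyz : ‖y * z‖ < 1 := by simpa using norm_pow_mul_pow_lt_one hy.le hz 1 one_ne_zero
  have hsum : Summable (ltPairTerm y z) :=
    .of_norm_bounded ((summable_geometric_of_lt_one (norm_nonneg y) hy).mul_of_nonneg
      (summable_geometric_of_lt_one (norm_nonneg z) hz) (fun _ ↦ by positivity)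
      (fun _ ↦ by positivity)) norm_ltPairTerm_le
  have hcols : HasSum (fun b : ℕ ↦ (z ^ b - (y * z) ^ b) / b * (1 / (1 - y)))
      (∑' q, ltPairTerm y z q) :=
    ((Equiv.prodComm ℕ ℕ).hasSum_iff.mpr hsum.hasSum).prod_fiberwise
      fun b ↦ hasSum_ltPairTerm_fiber b hy1
  have hlogs : HasSum (fun b : ℕ ↦ (z ^ b - (y * z) ^ b) / b * (1 / (1 - y)))
      ((log (1 - y * z) - log (1 - z)) * (1 / (1 - y))) := by
    have := ((hasSum_taylorSeries_neg_log hz).sub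
      (hasSum_taylorSeries_neg_log hyz)).mul_right (1 / (1 - y))
    rw [show (log (1 - y * z) - log (1 - z)) * (1 / (1 - y))
      = (-log (1 - z) - -log (1 - y * z)) * (1 / (1 - y)) by ring]
    exact this.congr_fun fun b ↦ by ring
  exact hcols.unique hlogs ▸ hsum.hasSum

lemma hasSum_ltPairTerm_smul (hy : ‖y‖ ≤ 1) (hz : ‖z‖ < 1) {q : ℕ × ℕ} (hq : q.1 < q.2) :
    HasSum (fun k : ℕ ↦ ltPairTerm y z ((k + 1) • q))
      (-log (1 - y ^ q.1 * z ^ q.2) * (1 / q.2)) := by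
  obtain ⟨a, b⟩ := q
  have hu := norm_pow_mul_pow_lt_one hy hz a (by omega : b ≠ 0)
  refine ((hasSum_taylorSeries_neg_log' hu).mul_right (1 / (b : ℂ))).congr_fun fun k ↦ ?_
  have hlt : (k + 1) * a < (k + 1) * b := Nat.mul_lt_mul_of_pos_left hq k.succ_pos
  simp only [ltPairTerm, Prod.smul_mk, smul_eq_mul, if_pos hlt, pow_mul, mul_pow]
  push_cast
  field_simp
  ring

end LtPairSeries

theorem stmt_12_general (y z : ℂ) (hy : ‖y‖ < 1) (hz : ‖z‖ < 1) :
    (∏' p : {p : ℕ × ℕ // 1 ≤ p.2 ∧ p.1 < p.2 ∧ Nat.gcd p.1 p.2 = 1},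
      (1 / (1 - y ^ p.1.1 * z ^ p.1.2)) ^ (1 / (p.1.2 : ℂ))) =
    ((1 - y * z) / (1 - z)) ^ (1 / (1 - y)) := by
  have hyz : ‖y * z‖ < 1 := by simpa using norm_pow_mul_pow_lt_one hy.le hz 1 one_ne_zero
  have hscaled : HasSum (ltPairTerm y z ∘ ReducedFraction.scale)
      ((log (1 - y * z) - log (1 - z)) * (1 / (1 - y))) := by
    refine (ReducedFraction.scale_injective.hasSum_iff fun q hq ↦ ?_).mpr (hasSum_ltPairTerm hy hz)
    rw [ReducedFraction.range_scale] at hq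
    exact if_neg hq
  have hlog : HasSum (fun p : ReducedFraction ↦ -log (1 - y ^ p.1.1 * z ^ p.1.2) * (1 / p.1.2))
      ((log (1 - y * z) - log (1 - z)) * (1 / (1 - y))) :=
    hscaled.prod_fiberwise fun p ↦ by
      dsimp only [Function.comp_def, ReducedFraction.scale]
      exact hasSum_ltPairTerm_smul hy.le hz p.2.2.1
  rw [div_cpow_eq_exp_of_re_pos (re_one_sub_pos hyz) (re_one_sub_pos hz), ← hlog.cexp.tprod_eq]
  exact tprod_congr fun p ↦ one_div_cpow_eq_exp_of_re_pos
    (re_one_sub_pos (norm_pow_mul_pow_lt_one hy.le hz _ (by omega))) _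

theorem stmt_12 (y z : ℂ) (hy : ‖y‖ < 1) (hz : ‖z‖ < 1) (hy1 : y ≠ 1) :
    (∏' p : {p : ℕ × ℕ // 1 ≤ p.2 ∧ p.1 < p.2 ∧ Nat.gcd p.1 p.2 = 1},
      (1 / (1 - y ^ p.1.1 * z ^ p.1.2)) ^ (1 / (p.1.2 : ℂ))) =
    ((1 - y * z) / (1 - z)) ^ (1 / (1 - y)) :=
  stmt_12_general y z hy hz
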